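/- For a prime p and γ ≥ 1, h(p^{2γ−1}, p^{2γ−1}) = (2p^γ − p^{γ−1} − 1)/(p − 1), and for β > 2γ−1, h(p^{2γ−1}, p^β) = p^{γ−1}, where h is the two-variable divisor-sum function h(m,n) = ∑_{d ∣ gcd(m,n), gcd(d,m/d)=gcd(d,n/d)=t} φ(d)/φ(d/t). -/
import Mathlib


/-- The arithmetic function h of the paper. -/
def h (m n : ℕ) : ℕ :=
  ∑ d ∈ ((Nat.gcd m n).divisors.filter
      (fun d => Nat.gcd d (m / d) = Nat.gcd d (n / d))),
    Nat.totient d / Nat.totient (d / Nat.gcd d (m / d))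

open Finset

lemma gcd_pow_pow (p m n : ℕ) : Nat.gcd (p^m) (p^n) = p ^ min m n := by
  rcases le_total m n with hmn|hmn
  · rw [min_eq_left hmn, Nat.gcd_eq_left (pow_dvd_pow p hmn)]
  · rw [min_eq_right hmn, Nat.gcd_eq_right (pow_dvd_pow p hmn)]

lemma sum_totient_pow {p : ℕ} (hp : p.Prime) (n : ℕ) :
    ∑ i ∈ range (n+1), Nat.totient (p^i) = p^n := by
  have := Nat.sum_totient (p^n)
  rwa [Nat.divisors_prime_pow hp, Finset.sum_map] at this

lemma geom (q n : ℕ) : (q+1) * ∑ j ∈ range n, (q+2)^j + 1 = (q+2)^n := by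
  induction n with
  | zero => simp
  | succ n ih =>
    rw [Finset.sum_range_succ]
    calc (q+1) * (∑ j ∈ range n, (q+2)^j + (q+2)^n) + 1
        = ((q+1) * ∑ j ∈ range n, (q+2)^j + 1) + (q+1)*(q+2)^n := by ring
      _ = (q+2)^(n+1) := by rw [ih]; ring

lemma h_pp {p : ℕ} (hp : p.Prime) (g b : ℕ) (hb : 2*g+1 ≤ b) :
    h (p^(2*g+1)) (p^b) =
      ∑ i ∈ range (2*g+2),
        if min i (2*g+1-i) = min i (b-i) then
          (if i ≤ g then Nat.totient (p^i) else p^(2*g+1-i)) else 0 := by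
  unfold h
  rw [Nat.gcd_eq_left (pow_dvd_pow p hb), Finset.sum_filter,
    Nat.divisors_prime_pow hp, Finset.sum_map]
  refine Finset.sum_congr rfl ?_
  intro i hi
  simp only [Function.Embedding.coeFn_mk]
  rw [Finset.mem_range] at hi
  have hia : i ≤ 2*g+1 := by omega
  have hib : i ≤ b := by omega
  rw [Nat.pow_div hia hp.pos, Nat.pow_div hib hp.pos, gcd_pow_pow, gcd_pow_pow]
  have hinj := Nat.pow_right_injective hp.two_le
  by_cases hc : min i (2*g+1-i) = min i (b-i)
  · rw [if_pos (by rw [hc]), if_pos hc]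
    rw [Nat.pow_div (min_le_left _ _) hp.pos]
    by_cases hig : i ≤ g
    · have hm : min i (2*g+1-i) = i := min_eq_left (by omega)
      rw [hm, if_pos hig]
      simp
    · have hm : min i (2*g+1-i) = 2*g+1-i := min_eq_right (by omega)
      have h1 : 0 < i := by omega
      have h2 : 0 < i - (2*g+1-i) := by omega
      rw [hm, if_neg hig, Nat.totient_prime_pow hp h1, Nat.totient_prime_pow hp h2,
          Nat.mul_div_mul_right _ _ (by have := hp.two_le; omega : 0 < p - 1),
          Nat.pow_div (by omega) hp.pos]
      congr 1
      omega
  · rw [if_neg (fun hh => hc (hinj hh)), if_neg hc]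

theorem h_odd (p : ℕ) (hp : p.Prime) (γ : ℕ) (hγ : 1 ≤ γ) :
    h (p ^ (2 * γ - 1)) (p ^ (2 * γ - 1)) = (2 * p ^ γ - p ^ (γ - 1) - 1) / (p - 1) ∧
    ∀ β : ℕ, 2 * γ - 1 < β → h (p ^ (2 * γ - 1)) (p ^ β) = p ^ (γ - 1) := by
  obtain ⟨g, rfl⟩ : ∃ g, γ = g + 1 := ⟨γ - 1, by omega⟩
  simp only [show 2*(g+1)-1 = 2*g+1 from by omega, show (g+1)-1 = g from by omega]
  constructor
  · rw [h_pp hp g (2*g+1) le_rfl]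
    simp only [eq_self_iff_true, if_true]
    have e1 : ∑ i ∈ range (2*g+2), (if i ≤ g then Nat.totient (p^i) else p^(2*g+1-i))
        = p^g + ∑ j ∈ range (g+1), p^j := by
      rw [show 2*g+2 = (g+1)+(g+1) from by omega, Finset.sum_range_add]
      congr 1
      · rw [← sum_totient_pow hp g]
        refine Finset.sum_congr rfl ?_
        intro i hi
        rw [Finset.mem_range] at hi
        rw [if_pos (by omega)]
      · have e2 : ∀ i ∈ range (g+1),
            (if g+1+i ≤ g then Nat.totient (p^(g+1+i)) else p^(2*g+1-(g+1+i))) = p^(g-i) := by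
          intro i hi
          rw [Finset.mem_range] at hi
          rw [if_neg (by omega)]
          congr 1
          omega
        rw [Finset.sum_congr rfl e2]
        have := Finset.sum_range_reflect (fun j => p^j) (g+1)
        simp only [show ∀ j, g+1-1-j = g-j from fun j => by omega] at this
        exact this
    rw [e1]
    obtain ⟨q, rfl⟩ : ∃ q, p = q + 2 := ⟨p - 2, by have := hp.two_le; omega⟩
    have key := geom q (g+1)
    have star : ((q+2)^g + ∑ j ∈ range (g+1), (q+2)^j) * (q+1) + (q+2)^g + 1
        = 2 * (q+2)^(g+1) := by
      calc ((q+2)^g + ∑ j ∈ range (g+1), (q+2)^j) * (q+1) + (q+2)^g + 1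
          = ((q+1) * ∑ j ∈ range (g+1), (q+2)^j + 1) + (q+2) * (q+2)^g := by ring
        _ = 2 * (q+2)^(g+1) := by rw [key]; ring
    have hval : 2 * (q+2)^(g+1) - (q+2)^g - 1
        = ((q+2)^g + ∑ j ∈ range (g+1), (q+2)^j) * ((q+2) - 1) := by
      rw [show (q+2) - 1 = q+1 from rfl]
      omega
    rw [hval, Nat.mul_div_cancel _ (by omega : 0 < (q+2) - 1)]
  · intro β hβ
    rw [h_pp hp g β (by omega)]
    rw [show 2*g+2 = (g+1)+(g+1) from by omega, Finset.sum_range_add]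
    have e3 : ∀ i ∈ range (g+1),
        (if min i (2*g+1-i) = min i (β-i) then
          (if i ≤ g then Nat.totient (p^i) else p^(2*g+1-i)) else 0) = Nat.totient (p^i) := by
      intro i hi
      rw [Finset.mem_range] at hi
      rw [if_pos (by omega), if_pos (by omega)]
    have e4 : ∀ i ∈ range (g+1),
        (if min (g+1+i) (2*g+1-(g+1+i)) = min (g+1+i) (β-(g+1+i)) then
          (if g+1+i ≤ g then Nat.totient (p^(g+1+i)) else p^(2*g+1-(g+1+i))) else 0) = 0 := by
      intro i hi
      rw [Finset.mem_range] at hi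
      rw [if_neg (by omega)]
    rw [Finset.sum_congr rfl e3, Finset.sum_congr rfl e4, Finset.sum_const_zero, add_zero,
      sum_totient_pow hp g]
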